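/- arXiv:1908.01334 — 2 statements merged into one kernel-verified Lean document; each statement's English description precedes it below -/
import Mathlib

section
/- Let Q be a positive integer, η : Fin Q → ℝ a probability mass function, α ∈ (0,1), W ≥ 0, λ ≥ 0, and let ω : Fin Q → ℝ be monotone nondecreasing. Let V : ℕ → Fin Q → ℝ satisfy: for every q the map x ↦ V x q is monotone nondecreasing and V x q ≥ x for all x, q. Say that scheduling is optimal at state (x, q) if W + λ·ω q + α·∑_{q'} η q' · V 1 q' ≤ α·∑_{q'} η q' · V (x+1) q'. For each q let τ_q be the least x such that scheduling is optimal at (x, q). Then the thresholds are monotone nondecreasing in the channel state: q₁ ≤ q₂ implies τ_{q₁} ≤ τ_{q₂}. (This is part 2 of Lemma 1.) -/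
/-- Lemma 1, part 2: the scheduling thresholds `τ_q` (least AoI at which
scheduling is optimal) are monotone nondecreasing in the channel state. -/
theorem stmt_3 (Q : ℕ) (hQ : 0 < Q) (η : Fin Q → ℝ)
    (hη : ∀ q, 0 ≤ η q) (hsum : ∑ q, η q = 1)
    (α : ℝ) (hα : α ∈ Set.Ioo (0 : ℝ) 1)
    (W lam : ℝ) (hW : 0 ≤ W) (hlam : 0 ≤ lam)
    (ω : Fin Q → ℝ) (hω : Monotone ω)
    (V : ℕ → Fin Q → ℝ)
    (hVmono : ∀ q, Monotone fun x => V x q)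
    (hVge : ∀ (x : ℕ) (q : Fin Q), (x : ℝ) ≤ V x q)
    (τ : Fin Q → ℕ)
    (hτ : ∀ q, τ q = sInf {x : ℕ |
      W + lam * ω q + α * ∑ q', η q' * V 1 q'
        ≤ α * ∑ q', η q' * V (x + 1) q'}) :
    ∀ q₁ q₂ : Fin Q, q₁ ≤ q₂ → τ q₁ ≤ τ q₂ := by
  intro q₁ q₂ hq
  obtain ⟨hα0, hα1⟩ := hα
  set S : Fin Q → Set ℕ := fun q => {x : ℕ |
      W + lam * ω q + α * ∑ q', η q' * V 1 q'
        ≤ α * ∑ q', η q' * V (x + 1) q'} with hS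
  -- S q₂ is nonempty
  have key : ∀ x : ℕ, ((x : ℝ) + 1) ≤ ∑ q', η q' * V (x + 1) q' := by
    intro x
    calc ((x : ℝ) + 1) = ∑ q', η q' * ((x : ℝ) + 1) := by
          rw [← Finset.sum_mul, hsum, one_mul]
      _ ≤ ∑ q', η q' * V (x + 1) q' := by
          apply Finset.sum_le_sum
          intro i _
          apply mul_le_mul_of_nonneg_left _ (hη i)
          have := hVge (x + 1) i
          push_cast at this
          linarith
  have hne : (S q₂).Nonempty := by
    obtain ⟨n, hn⟩ := exists_nat_ge ((W + lam * ω q₂ + α * ∑ q', η q' * V 1 q') / α)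
    refine ⟨n, ?_⟩
    have h1 : W + lam * ω q₂ + α * ∑ q', η q' * V 1 q' ≤ α * n :=
      by have := (div_le_iff₀ hα0).mp hn; linarith
    have h2 : (n : ℝ) ≤ (n : ℝ) + 1 := by linarith
    have h3 := key n
    have : α * (n : ℝ) ≤ α * ∑ q', η q' * V (n + 1) q' := by
      apply mul_le_mul_of_nonneg_left _ (le_of_lt hα0)
      linarith
    exact le_trans h1 this
  have hsub : S q₂ ⊆ S q₁ := by
    intro x hx
    have hω' : lam * ω q₁ ≤ lam * ω q₂ :=
      mul_le_mul_of_nonneg_left (hω hq) hlam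
    simp only [hS, Set.mem_setOf_eq] at hx ⊢
    linarith
  rw [hτ q₁, hτ q₂]
  exact Nat.sInf_le (hsub (Nat.sInf_mem hne))
end

section
/- Let Q be a positive integer, η : Fin Q → ℝ a probability mass function, α ∈ (0,1), W ≥ 0, λ ≥ 0, ω : Fin Q → ℝ. Define the Bellman operator T on functions V : ℕ → Fin Q → ℝ by (T V) x q = min( x + α·∑_{q'} η q' · V (x+1) q' , x + W + λ·ω q + α·∑_{q'} η q' · V 1 q' ). If for every channel state q the map x ↦ V x q is monotone nondecreasing, then for every q the map x ↦ (T V) x q is monotone nondecreasing. (This is the induction step in the proof of Lemma 3: value iteration preserves monotonicity of the discounted value function in the AoI.) -/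
/-- Lemma 3 (induction step in AoI): the Bellman operator of the α-discounted
decoupled unconstrained problem preserves monotonicity of the value function
in the AoI. -/
theorem stmt_4 (Q : ℕ) (hQ : 0 < Q) (η : Fin Q → ℝ)
    (hη : ∀ q, 0 ≤ η q) (hsum : ∑ q, η q = 1)
    (α : ℝ) (hα : α ∈ Set.Ioo (0 : ℝ) 1)
    (W lam : ℝ) (hW : 0 ≤ W) (hlam : 0 ≤ lam)
    (ω : Fin Q → ℝ)
    (T : (ℕ → Fin Q → ℝ) → (ℕ → Fin Q → ℝ))
    (hT : ∀ (V : ℕ → Fin Q → ℝ) (x : ℕ) (q : Fin Q),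
      T V x q = min ((x : ℝ) + α * ∑ q', η q' * V (x + 1) q')
        ((x : ℝ) + W + lam * ω q + α * ∑ q', η q' * V 1 q'))
    (V : ℕ → Fin Q → ℝ)
    (hV : ∀ q, Monotone fun x => V x q) :
    ∀ q, Monotone fun x => T V x q := by
  intro q x y hxy
  simp only [hT]
  have hx : (x : ℝ) ≤ (y : ℝ) := by exact_mod_cast hxy
  have hsum' : ∑ q', η q' * V (x + 1) q' ≤ ∑ q', η q' * V (y + 1) q' := by
    apply Finset.sum_le_sum
    intro i _
    exact mul_le_mul_of_nonneg_left (hV i (by omega)) (hη i)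
  exact min_le_min
    (add_le_add hx (mul_le_mul_of_nonneg_left hsum' hα.1.le))
    (by linarith)
end
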